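/- For m = 2 (three fields), the flow ḋ_k = (1+αd_k)(c_k^{(1)}−c_{k−1}^{(1)}), ċ_k^{(1)} = c_k^{(1)}(d_{k+1}−d_k+αc_{k+1}^{(1)}−αc_{k−1}^{(1)}) + (c_k^{(2)}−c_{k−1}^{(2)}), ċ_k^{(2)} = c_k^{(2)}(d_{k+2}−d_k+αc_{k+2}^{(1)}−αc_{k−1}^{(1)}) is Hamiltonian with respect to the quadratic bracket {d_k,c_k^{(1)}} = −c_k^{(1)}(1+αd_k), {c_k^{(1)},d_{k+1}} = −c_k^{(1)}(1+αd_{k+1}), {d_k,c_k^{(2)}} = −c_k^{(2)}(1+αd_k), {c_k^{(2)},d_{k+2}} = −c_k^{(2)}(1+αd_{k+2}), {c_k^{(1)},c_{k+1}^{(1)}} = −c_k^{(2)} − αc_k^{(1)}c_{k+1}^{(1)}, {c_k^{(1)},c_{k+1}^{(2)}} = −αc_k^{(1)}c_{k+1}^{(2)}, {c_k^{(2)},c_{k+2}^{(1)}} = −αc_k^{(2)}c_{k+2}^{(1)}, {c_k^{(2)},c_{k+1}^{(2)}} = −αc_k^{(2)}c_{k+1}^{(2)}, {c_k^{(2)},c_{k+2}^{(2)}}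 = −αc_k^{(2)}c_{k+2}^{(2)} (all other elementary brackets zero), with Hamilton function α^{−1}H₁ = α^{−1}Σ_k d_k + Σ_k c_k^{(1)}. -/
import Mathlib


/-- Coordinate index set for the three-field system:
`inl k ↦ d_k`, `inr (inl k) ↦ c_k^{(1)}`, `inr (inr k) ↦ c_k^{(2)}`. -/
abbrev RT3Idx (N : ℕ) := ZMod N ⊕ (ZMod N ⊕ ZMod N)

/-- Structure matrix of the quadratic bracket of `RTL₃⁺(α)`:
`{d_k,c_k^{(1)}} = −c_k^{(1)}(1+αd_k)`, `{c_k^{(1)},d_{k+1}} = −c_k^{(1)}(1+αd_{k+1})`,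
`{d_k,c_k^{(2)}} = −c_k^{(2)}(1+αd_k)`, `{c_k^{(2)},d_{k+2}} = −c_k^{(2)}(1+αd_{k+2})`,
`{c_k^{(1)},c_{k+1}^{(1)}} = −c_k^{(2)} − αc_k^{(1)}c_{k+1}^{(1)}`,
`{c_k^{(1)},c_{k+1}^{(2)}} = −αc_k^{(1)}c_{k+1}^{(2)}`,
`{c_k^{(2)},c_{k+2}^{(1)}} = −αc_k^{(2)}c_{k+2}^{(1)}`,
`{c_k^{(2)},c_{k+1}^{(2)}} = −αc_k^{(2)}c_{k+1}^{(2)}`,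
`{c_k^{(2)},c_{k+2}^{(2)}} = −αc_k^{(2)}c_{k+2}^{(2)}`,
all other elementary brackets zero. -/
def RT3P (N : ℕ) (α : ℝ) (u v : RT3Idx N) (q : RT3Idx N → ℝ) : ℝ :=
  match u, v with
  | .inl _, .inl _ => 0
  | .inl k, .inr (.inl l) =>
      (if l = k then -q (.inr (.inl l)) * (1 + α * q (.inl k)) else 0) +
      (if k = l + 1 then q (.inr (.inl l)) * (1 + α * q (.inl k)) else 0)
  | .inr (.inl l), .inl k =>
      (if l = k then q (.inr (.inl l)) * (1 + α * q (.inl k)) else 0) +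
      (if k = l + 1 then -q (.inr (.inl l)) * (1 + α * q (.inl k)) else 0)
  | .inl k, .inr (.inr l) =>
      (if l = k then -q (.inr (.inr l)) * (1 + α * q (.inl k)) else 0) +
      (if k = l + 2 then q (.inr (.inr l)) * (1 + α * q (.inl k)) else 0)
  | .inr (.inr l), .inl k =>
      (if l = k then q (.inr (.inr l)) * (1 + α * q (.inl k)) else 0) +
      (if k = l + 2 then -q (.inr (.inr l)) * (1 + α * q (.inl k)) else 0)
  | .inr (.inl k), .inr (.inl l) =>
      (if l = k + 1 then -q (.inr (.inr k)) - α * q (.inr (.inl k)) * q (.inr (.inl l)) else 0) +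
      (if k = l + 1 then q (.inr (.inr l)) + α * q (.inr (.inl l)) * q (.inr (.inl k)) else 0)
  | .inr (.inl k), .inr (.inr l) =>
      (if l = k + 1 then -α * q (.inr (.inl k)) * q (.inr (.inr l)) else 0) +
      (if k = l + 2 then α * q (.inr (.inr l)) * q (.inr (.inl k)) else 0)
  | .inr (.inr k), .inr (.inl l) =>
      (if l = k + 2 then -α * q (.inr (.inr k)) * q (.inr (.inl l)) else 0) +
      (if k = l + 1 then α * q (.inr (.inl l)) * q (.inr (.inr k)) else 0)
  | .inr (.inr k), .inr (.inr l) =>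
      (if l = k + 1 then -α * q (.inr (.inr k)) * q (.inr (.inr l)) else 0) +
      (if l = k + 2 then -α * q (.inr (.inr k)) * q (.inr (.inr l)) else 0) +
      (if k = l + 1 then α * q (.inr (.inr l)) * q (.inr (.inr k)) else 0) +
      (if k = l + 2 then α * q (.inr (.inr l)) * q (.inr (.inr k)) else 0)

/-- The Hamilton function `α⁻¹H₁ = α⁻¹ Σ_k d_k + Σ_k c_k^{(1)}`. -/
noncomputable def RT3H (N : ℕ) [NeZero N] (α : ℝ) (q : RT3Idx N → ℝ) : ℝ :=
  α⁻¹ * ∑ k : ZMod N, q (.inl k) + ∑ k : ZMod N, q (.inr (.inl k))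

noncomputable def RT3L (N : ℕ) [NeZero N] (α : ℝ) : (RT3Idx N → ℝ) →L[ℝ] ℝ :=
  α⁻¹ • (∑ k : ZMod N, ContinuousLinearMap.proj (R := ℝ) (φ := fun _ : RT3Idx N => ℝ) (Sum.inl k)) +
  ∑ k : ZMod N, ContinuousLinearMap.proj (R := ℝ) (φ := fun _ : RT3Idx N => ℝ) (Sum.inr (Sum.inl k))

lemma RT3H_eq (N : ℕ) [NeZero N] (α : ℝ) : RT3H N α = ⇑(RT3L N α) := by
  funext q
  simp [RT3H, RT3L, ContinuousLinearMap.sum_apply, smul_eq_mul]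

lemma fderiv_RT3H (N : ℕ) [NeZero N] (α : ℝ) (q v : RT3Idx N → ℝ) :
    fderiv ℝ (RT3H N α) q v
      = α⁻¹ * ∑ k : ZMod N, v (.inl k) + ∑ k : ZMod N, v (.inr (.inl k)) := by
  rw [RT3H_eq, (RT3L N α).fderiv]
  simp [RT3L, ContinuousLinearMap.sum_apply, smul_eq_mul]

lemma sum_if_shift {N : ℕ} [NeZero N] (f : ZMod N → ℝ) (k a : ZMod N) :
    (∑ l : ZMod N, if k = l + a then f l else 0) = f (k - a) := by
  rw [Finset.sum_eq_single (k - a)]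
  · simp
  · intro b _ hb
    rw [if_neg]
    intro h
    exact hb (by rw [h]; ring)
  · simp

/-- for `m = 2`, the flow of `RTL₃⁺(α)` is Hamiltonian with respect to the
quadratic bracket, with Hamilton function `α⁻¹H₁`. -/
theorem stmt16 (N : ℕ) [NeZero N] (hN : 5 ≤ N) (α : ℝ) (hα : α ≠ 0) :
    ∀ q : RT3Idx N → ℝ,
      (∀ k : ZMod N,
        (1 + α * q (.inl k)) * (q (.inr (.inl k)) - q (.inr (.inl (k - 1))))
          = ∑ u : RT3Idx N,
              fderiv ℝ (RT3H N α) q (Pi.single u 1) * RT3P N α u (.inl k) q) ∧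
      (∀ k : ZMod N,
        q (.inr (.inl k)) * (q (.inl (k + 1)) - q (.inl k)
              + α * q (.inr (.inl (k + 1))) - α * q (.inr (.inl (k - 1))))
            + (q (.inr (.inr k)) - q (.inr (.inr (k - 1))))
          = ∑ u : RT3Idx N,
              fderiv ℝ (RT3H N α) q (Pi.single u 1) * RT3P N α u (.inr (.inl k)) q) ∧
      (∀ k : ZMod N,
        q (.inr (.inr k)) * (q (.inl (k + 2)) - q (.inl k)
              + α * q (.inr (.inl (k + 2))) - α * q (.inr (.inl (k - 1))))
          = ∑ u : RT3Idx N,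
              fderiv ℝ (RT3H N α) q (Pi.single u 1) * RT3P N α u (.inr (.inr k)) q) := by
  intro q
  refine ⟨fun k => ?_, fun k => ?_, fun k => ?_⟩ <;>
  · rw [Fintype.sum_sum_type, Fintype.sum_sum_type]
    simp only [fderiv_RT3H, RT3P, Pi.single_apply, Sum.inl.injEq, Sum.inr.injEq,
      reduceCtorEq, if_false, ite_false, Finset.sum_ite_eq', Finset.sum_ite_eq,
      Finset.mem_univ, if_true, ite_true, Finset.sum_const_zero, mul_zero, zero_mul,
      add_zero, zero_add, mul_one, one_mul, mul_add, add_mul, Finset.sum_add_distrib,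
      mul_ite, ite_mul, sum_if_shift]
    field_simp
    ring
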